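/- For every μ > 0, the function q(x,t;μ) = ∫₀^∞ (2πs)^(−1/2) e^(−x²/(2s)) · s^(μ−1) e^(−s/t) / (t^μ Γ(μ)) ds, which is the density of the process B(G₁(t)) obtained by subordinating a standard Brownian motion to an independent Gamma process, satisfies the third-order partial differential equation 4 ∂q/∂t = (2μ − 3) ∂²q/∂x² − x ∂³q/∂x³ for all x ∈ ℝ \ {0} and t > 0. -/

import Mathlib

open MeasureTheory

/-- The density of `B(G₁(t))`, a standard Brownian motion subordinated to an
independent Gamma process:
`q(x,t;μ) = ∫₀^∞ (2πs)^(−1/2) e^(−x²/(2s)) · s^(μ−1) e^(−s/t)/(t^μ Γ(μ)) ds`. -/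
noncomputable def qBG (μ x t : ℝ) : ℝ :=
  ∫ s in Set.Ioi (0:ℝ),
    (2 * Real.pi * s) ^ (-(1:ℝ) / 2) * Real.exp (-x ^ 2 / (2 * s)) *
      (s ^ (μ - 1) * Real.exp (-s / t) / (t ^ μ * Real.Gamma μ))

/-!
With `F(a, b, c) = ∫₀^∞ s^a e^{-b/s} e^{-cs} ds` (the normalising integral of a generalized
inverse Gaussian law), the density is `q(x,t) = (2π)^{-1/2} Γ(μ)⁻¹ t^{-μ} F(μ - 3/2, x²/2, 1/t)`.
Differentiation under the integral sign gives `∂_b F(a, b, c) = -F(a - 1, b, c)` and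
`∂_c F(a, b, c) = -F(a + 1, b, c)`, while integrating the `s`-derivative of the integrand over
`(0, ∞)` gives the recurrence `c F(a) = a F(a - 1) + b F(a - 2)`. In these terms the equation is
a linear combination of the recurrence at `a + 1`, `a` and `a - 1`, where `a = μ - 3/2`.
-/

open Real Set Filter Topology Metric

theorem integral_Ioi_of_hasDerivAt_of_tendsto_nhdsGT {f f' : ℝ → ℝ} {a l m : ℝ}
    (hderiv : ∀ x ∈ Ioi a, HasDerivAt f (f' x) x) (f'int : IntegrableOn f' (Ioi a))
    (hl : Tendsto f (𝓝[>] a) (𝓝 l)) (hm : Tendsto f atTop (𝓝 m)) :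
    ∫ x in Ioi a, f' x = m - l := by
  classical
  -- The value `f a` is irrelevant: replace it by the limit `l`.
  have hcont : ContinuousWithinAt (Function.update f a l) (Ici a) a := by
    rw [← Ioi_insert, continuousWithinAt_insert_self, continuousWithinAt_update_same]
    exact hl.mono_left (nhdsWithin_mono _ sdiff_subset)
  have hderiv' : ∀ x ∈ Ioi a, HasDerivAt (Function.update f a l) (f' x) x := fun x hx =>
    (hderiv x hx).congr_of_eventuallyEq <| by
      filter_upwards [eventually_ne_nhds (ne_of_gt hx)] with y hy
      exact Function.update_of_ne hy _ _
  have hm' : Tendsto (Function.update f a l) atTop (𝓝 m) := hm.congr' <| by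
    filter_upwards [eventually_ne_atTop a] with y hy
    exact (Function.update_of_ne hy _ _).symm
  simpa using integral_Ioi_of_hasDerivAt_of_tendsto hcont hderiv' f'int hm'

theorem hasDerivAt_integral_mul_exp_neg_mul {α : Type*} [MeasurableSpace α] {ν : Measure α}
    {w φ : α → ℝ} {u : ℝ} (hu : 0 < u) (hw : AEStronglyMeasurable w ν)
    (hφm : AEStronglyMeasurable φ ν) (hφ : ∀ᵐ s ∂ν, 0 ≤ φ s)
    (hint : Integrable (fun s => w s * exp (-(u * φ s))) ν)
    (hint' : Integrable (fun s => w s * φ s * exp (-(u / 2 * φ s))) ν) :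
    HasDerivAt (fun v => ∫ s, w s * exp (-(v * φ s)) ∂ν)
      (-∫ s, w s * φ s * exp (-(u * φ s)) ∂ν) u := by
  have hexp : ∀ v : ℝ, AEStronglyMeasurable (fun s => exp (-(v * φ s))) ν :=
    fun v => continuous_exp.comp_aestronglyMeasurable (hφm.const_mul v).neg
  rw [← integral_neg]
  refine (hasDerivAt_integral_of_dominated_loc_of_deriv_le
    (F := fun v s => w s * exp (-(v * φ s))) (F' := fun v s => -(w s * φ s * exp (-(v * φ s))))
    (ball_mem_nhds u (half_pos hu)) (Eventually.of_forall fun v => hw.mul (hexp v))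
    hint ((hw.mul hφm).mul (hexp u)).neg ?_ hint'.norm ?_).2
  · filter_upwards [hφ] with s hs v hv
    have hv : u / 2 < v := by
      have := (abs_lt.1 (mem_ball_iff_norm.1 hv)).1
      linarith
    simp only [norm_neg, norm_mul, Real.norm_eq_abs, abs_exp]
    gcongr
  · refine ae_of_all _ fun s v _ => ?_
    exact ((hasDerivAt_mul_const (φ s)).neg.exp.const_mul (w s)).congr_deriv
      (by simp only [Pi.neg_apply]; ring)

noncomputable def gigKernel (a b c s : ℝ) : ℝ := s ^ a * exp (-(b / s)) * exp (-(c * s))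

noncomputable def gigIntegral (a b c : ℝ) : ℝ := ∫ s in Ioi 0, gigKernel a b c s

section gigKernel

variable {a b c s : ℝ}

lemma gigKernel_add (k : ℝ) (hs : 0 < s) :
    gigKernel (a + k) b c s = s ^ k * gigKernel a b c s := by
  simp only [gigKernel, rpow_add hs]
  ring

lemma gigKernel_sub_one (hs : 0 < s) : gigKernel (a - 1) b c s = s⁻¹ * gigKernel a b c s := by
  rw [sub_eq_add_neg, gigKernel_add _ hs, rpow_neg_one]

lemma gigKernel_add_one (hs : 0 < s) : gigKernel (a + 1) b c s = s * gigKernel a b c s := by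
  rw [gigKernel_add _ hs, rpow_one]

lemma continuousOn_gigKernel : ContinuousOn (gigKernel a b c) (Ioi 0) := fun s (hs : 0 < s) =>
  ContinuousAt.continuousWithinAt <| show ContinuousAt
    (fun σ => σ ^ a * exp (-(b / σ)) * exp (-(c * σ))) s by fun_prop (disch := simp [hs.ne'])

lemma hasDerivAt_gigKernel (hs : 0 < s) :
    HasDerivAt (gigKernel a b c)
      (a * gigKernel (a - 1) b c s + b * gigKernel (a - 2) b c s - c * gigKernel a b c s) s := by
  have hb : HasDerivAt (fun σ => -(b / σ)) (b * (s ^ 2)⁻¹) s := by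
    simpa [div_eq_mul_inv] using ((hasDerivAt_inv hs.ne').const_mul b).fun_neg
  have hc : HasDerivAt (fun σ => -(c * σ)) (-c) s := by
    simpa using ((hasDerivAt_id s).const_mul c).fun_neg
  have h := ((hasDerivAt_rpow_const (p := a) (Or.inl hs.ne')).fun_mul hb.exp).fun_mul hc.exp
  rw [show a - 2 = a - 1 - 1 by ring, gigKernel_sub_one (a := a - 1) hs,
    gigKernel_sub_one (a := a) hs]
  refine h.congr_deriv ?_
  simp only [gigKernel]
  rw [rpow_sub_one hs.ne']
  ring

lemma exp_neg_div_le (n : ℕ) (hb : 0 < b) (hs : 0 < s) :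
    exp (-(b / s)) ≤ n.factorial / b ^ n * s ^ n := by
  rw [exp_neg]
  calc (exp (b / s))⁻¹ ≤ ((b / s) ^ n / n.factorial)⁻¹ :=
        inv_anti₀ (by positivity) (pow_div_factorial_le_exp _ (by positivity) n)
    _ = n.factorial / b ^ n * s ^ n := by
        field_simp
        rw [div_pow, div_mul_cancel₀ _ (by positivity)]

lemma integrableOn_gigKernel (a : ℝ) (hb : 0 < b) (hc : 0 < c) :
    IntegrableOn (gigKernel a b c) (Ioi 0) := by
  obtain ⟨n, hn⟩ := exists_nat_gt (-a - 1)
  have hdom : IntegrableOn (fun s => s ^ (a + n) * exp (-c * s ^ (1 : ℝ))) (Ioi 0) :=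
    integrableOn_rpow_mul_exp_neg_mul_rpow (by linarith) one_pos hc
  refine (hdom.const_mul (n.factorial / b ^ n)).mono'
    (continuousOn_gigKernel.aestronglyMeasurable measurableSet_Ioi) ?_
  filter_upwards [ae_restrict_mem measurableSet_Ioi] with s hs
  have hs : 0 < s := hs
  rw [norm_of_nonneg (by unfold gigKernel; positivity), gigKernel, rpow_add hs, rpow_natCast,
    rpow_one, neg_mul]
  calc s ^ a * exp (-(b / s)) * exp (-(c * s))
      ≤ s ^ a * (n.factorial / b ^ n * s ^ n) * exp (-(c * s)) := by
        gcongr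
        exact exp_neg_div_le n hb hs
    _ = _ := by ring

lemma tendsto_gigKernel_nhdsGT_zero (hb : 0 < b) (hc : 0 ≤ c) :
    Tendsto (gigKernel a b c) (𝓝[>] 0) (𝓝 0) := by
  have hlim : Tendsto (fun s : ℝ => s ^ a * exp (-(b / s))) (𝓝[>] 0) (𝓝 0) := by
    refine ((tendsto_rpow_mul_exp_neg_mul_atTop_nhds_zero (-a) b hb).comp
      tendsto_inv_nhdsGT_zero).congr' ?_
    filter_upwards [self_mem_nhdsWithin] with s hs
    simp only [Function.comp_apply]
    rw [inv_rpow (le_of_lt hs), ← rpow_neg (le_of_lt hs), neg_neg, neg_mul, div_eq_mul_inv]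
  refine squeeze_zero' ?_ ?_ hlim
  · filter_upwards [self_mem_nhdsWithin] with s (hs : 0 < s)
    exact (by unfold gigKernel; positivity : 0 ≤ gigKernel a b c s)
  · filter_upwards [self_mem_nhdsWithin] with s (hs : 0 < s)
    unfold gigKernel
    refine mul_le_of_le_one_right (by positivity) (exp_le_one_iff.2 ?_)
    nlinarith

lemma tendsto_gigKernel_atTop (hb : 0 ≤ b) (hc : 0 < c) :
    Tendsto (gigKernel a b c) atTop (𝓝 0) := by
  have hlim : Tendsto (fun s : ℝ => s ^ a * exp (-(c * s))) atTop (𝓝 0) := by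
    simpa only [neg_mul] using tendsto_rpow_mul_exp_neg_mul_atTop_nhds_zero a c hc
  refine squeeze_zero' ?_ ?_ hlim
  · filter_upwards [eventually_gt_atTop 0] with s hs
    exact (by unfold gigKernel; positivity : 0 ≤ gigKernel a b c s)
  · filter_upwards [eventually_gt_atTop 0] with s hs
    unfold gigKernel
    rw [mul_right_comm]
    refine mul_le_of_le_one_right (by positivity) (exp_le_one_iff.2 ?_)
    have : 0 ≤ b / s := by positivity
    linarith

end gigKernel

section gigIntegral

variable {a b c : ℝ}

theorem gigIntegral_recurrence (hb : 0 < b) (hc : 0 < c) :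
    c * gigIntegral a b c = a * gigIntegral (a - 1) b c + b * gigIntegral (a - 2) b c := by
  have hint := fun a' => integrableOn_gigKernel a' hb hc
  have h := integral_Ioi_of_hasDerivAt_of_tendsto_nhdsGT (fun s hs => hasDerivAt_gigKernel hs)
    ((((hint _).const_mul a).add ((hint _).const_mul b)).sub ((hint a).const_mul c))
    (tendsto_gigKernel_nhdsGT_zero hb hc.le) (tendsto_gigKernel_atTop hb.le hc)
  rw [integral_sub (((hint _).const_mul a).fun_add ((hint _).const_mul b)) ((hint a).const_mul c),
    integral_add ((hint _).const_mul a) ((hint _).const_mul b), integral_const_mul,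
    integral_const_mul, integral_const_mul, sub_zero] at h
  unfold gigIntegral
  linarith

theorem hasDerivAt_gigIntegral_b (hb : 0 < b) (hc : 0 < c) :
    HasDerivAt (fun b => gigIntegral a b c) (-gigIntegral (a - 1) b c) b := by
  have hint : Integrable (fun s => s ^ a * exp (-(c * s)) * exp (-(b * s⁻¹)))
      (volume.restrict (Ioi 0)) :=
    (integrableOn_gigKernel a hb hc).congr_fun
      (fun s _ => by simp only [gigKernel, div_eq_mul_inv]; ring) measurableSet_Ioi
  have hint' : Integrable (fun s => s ^ a * exp (-(c * s)) * s⁻¹ * exp (-(b / 2 * s⁻¹)))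
      (volume.restrict (Ioi 0)) :=
    (integrableOn_gigKernel (a - 1) (half_pos hb) hc).congr_fun
      (fun s hs => by rw [gigKernel_sub_one hs]; simp only [gigKernel, div_eq_mul_inv]; ring)
      measurableSet_Ioi
  have h := hasDerivAt_integral_mul_exp_neg_mul hb
    (by fun_prop : Measurable fun s : ℝ => s ^ a * exp (-(c * s))).aestronglyMeasurable
    measurable_inv.aestronglyMeasurable
    (ae_restrict_of_forall_mem measurableSet_Ioi fun s hs => inv_nonneg.2 (le_of_lt hs))
    hint hint'
  convert h using 2
  · refine integral_congr_ae (ae_of_all _ fun s => ?_)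
    simp only [gigKernel, div_eq_mul_inv]
    ring
  · refine setIntegral_congr_fun measurableSet_Ioi fun s hs => ?_
    rw [gigKernel_sub_one hs]
    simp only [gigKernel, div_eq_mul_inv]
    ring

theorem hasDerivAt_gigIntegral_c (hb : 0 < b) (hc : 0 < c) :
    HasDerivAt (fun c => gigIntegral a b c) (-gigIntegral (a + 1) b c) c := by
  have hint' : Integrable (fun s => s ^ a * exp (-(b / s)) * s * exp (-(c / 2 * s)))
      (volume.restrict (Ioi 0)) :=
    (integrableOn_gigKernel (a + 1) hb (half_pos hc)).congr_fun
      (fun s hs => by rw [gigKernel_add_one hs]; simp only [gigKernel]; ring) measurableSet_Ioi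
  have h := hasDerivAt_integral_mul_exp_neg_mul hc
    (by fun_prop : Measurable fun s : ℝ => s ^ a * exp (-(b / s))).aestronglyMeasurable
    measurable_id.aestronglyMeasurable
    (ae_restrict_of_forall_mem measurableSet_Ioi fun s hs => le_of_lt hs)
    (integrableOn_gigKernel a hb hc) hint'
  convert h using 2
  · rfl
  · refine setIntegral_congr_fun measurableSet_Ioi fun s hs => ?_
    rw [gigKernel_add_one hs]
    simp only [gigKernel, id]
    ring

end gigIntegral

section radialProfile

variable {a c : ℝ}

lemma hasDerivAt_gigIntegral_sq_half (hc : 0 < c) {ξ : ℝ} (hξ : ξ ≠ 0) :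
    HasDerivAt (fun y => gigIntegral a (y ^ 2 / 2) c)
      (-(ξ * gigIntegral (a - 1) (ξ ^ 2 / 2) c)) ξ :=
  ((hasDerivAt_gigIntegral_b (by positivity) hc).comp ξ
    ((hasDerivAt_pow 2 ξ).div_const 2)).congr_deriv (by push_cast; ring)

lemma deriv_gigIntegral_sq_half (K : ℝ) (hc : 0 < c) :
    EqOn (deriv fun y => K * gigIntegral a (y ^ 2 / 2) c)
      (fun y => -(K * (y * gigIntegral (a - 1) (y ^ 2 / 2) c))) {0}ᶜ := fun _ hξ =>
  (((hasDerivAt_gigIntegral_sq_half hc hξ).const_mul K).congr_deriv (by ring)).deriv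

lemma deriv_deriv_gigIntegral_sq_half (K : ℝ) (hc : 0 < c) :
    EqOn (deriv (deriv fun y => K * gigIntegral a (y ^ 2 / 2) c))
      (fun y => K * (y ^ 2 * gigIntegral (a - 2) (y ^ 2 / 2) c
        - gigIntegral (a - 1) (y ^ 2 / 2) c)) {0}ᶜ := fun ξ hξ => by
  have h := hasDerivAt_gigIntegral_sq_half (a := a - 1) hc hξ
  rw [show a - 1 - 1 = a - 2 by ring] at h
  rw [((deriv_gigIntegral_sq_half K hc).eventuallyEq_of_mem
    (isOpen_compl_singleton.mem_nhds hξ)).deriv_eq]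
  exact ((((hasDerivAt_id ξ).mul h).const_mul K).neg.congr_deriv (by simp only [id]; ring)).deriv

lemma deriv_deriv_deriv_gigIntegral_sq_half (K : ℝ) (hc : 0 < c) :
    EqOn (deriv (deriv (deriv fun y => K * gigIntegral a (y ^ 2 / 2) c)))
      (fun y => K * (3 * y * gigIntegral (a - 2) (y ^ 2 / 2) c
        - y ^ 3 * gigIntegral (a - 3) (y ^ 2 / 2) c)) {0}ᶜ := fun ξ hξ => by
  have h₁ := hasDerivAt_gigIntegral_sq_half (a := a - 1) hc hξ
  have h₂ := hasDerivAt_gigIntegral_sq_half (a := a - 2) hc hξ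
  rw [show a - 1 - 1 = a - 2 by ring] at h₁
  rw [show a - 2 - 1 = a - 3 by ring] at h₂
  rw [((deriv_deriv_gigIntegral_sq_half K hc).eventuallyEq_of_mem
    (isOpen_compl_singleton.mem_nhds hξ)).deriv_eq]
  exact ((((hasDerivAt_pow 2 ξ).mul h₂).sub h₁).const_mul K
    |>.congr_deriv (by push_cast; ring)).deriv

end radialProfile

lemma qBG_eq_gigIntegral (μ x : ℝ) {t : ℝ} (ht : 0 < t) :
    qBG μ x t = (2 * π) ^ (-(1 : ℝ) / 2) / Gamma μ * t ^ (-μ)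
      * gigIntegral (μ - 3 / 2) (x ^ 2 / 2) t⁻¹ := by
  unfold qBG gigIntegral
  rw [← integral_const_mul]
  refine setIntegral_congr_fun measurableSet_Ioi fun s (hs : 0 < s) => ?_
  simp only [gigKernel]
  rw [mul_rpow (by positivity) hs.le, show μ - 3 / 2 = -(1 : ℝ) / 2 + (μ - 1) by ring,
    rpow_add hs, rpow_neg ht.le]
  field_simp

lemma hasDerivAt_qBG_t (μ : ℝ) {x t : ℝ} (hx : x ≠ 0) (ht : 0 < t) :
    HasDerivAt (fun τ => qBG μ x τ)
      ((2 * π) ^ (-(1 : ℝ) / 2) / Gamma μ * t ^ (-μ) *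
        (t⁻¹ ^ 2 * gigIntegral (μ - 3 / 2 + 1) (x ^ 2 / 2) t⁻¹
          - μ * t⁻¹ * gigIntegral (μ - 3 / 2) (x ^ 2 / 2) t⁻¹)) t := by
  have hF := (hasDerivAt_gigIntegral_c (a := μ - 3 / 2) (b := x ^ 2 / 2) (by positivity)
    (inv_pos.2 ht)).comp t (hasDerivAt_inv ht.ne')
  have h := ((hasDerivAt_rpow_const (p := -μ) (Or.inl ht.ne')).const_mul
    ((2 * π) ^ (-(1 : ℝ) / 2) / Gamma μ)).mul hF
  refine (h.congr_of_eventuallyEq ?_).congr_deriv ?_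
  · filter_upwards [eventually_gt_nhds ht] with τ hτ
    exact qBG_eq_gigIntegral μ x hτ
  · rw [rpow_sub_one ht.ne']
    simp only [Function.comp_apply]
    field_simp
    ring

theorem stmt_12_general (μ : ℝ) :
    ∀ x t : ℝ, x ≠ 0 → 0 < t →
      4 * deriv (fun τ => qBG μ x τ) t
        = (2 * μ - 3) * deriv (deriv (fun ξ => qBG μ ξ t)) x
          - x * deriv (deriv (deriv (fun ξ => qBG μ ξ t))) x := by
  intro x t hx ht
  have hq : (fun ξ => qBG μ ξ t) = fun ξ => (2 * π) ^ (-(1 : ℝ) / 2) / Gamma μ * t ^ (-μ)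
      * gigIntegral (μ - 3 / 2) (ξ ^ 2 / 2) t⁻¹ := funext fun ξ => qBG_eq_gigIntegral μ ξ ht
  rw [(hasDerivAt_qBG_t μ hx ht).deriv, hq,
    deriv_deriv_gigIntegral_sq_half _ (inv_pos.2 ht) hx,
    deriv_deriv_deriv_gigIntegral_sq_half _ (inv_pos.2 ht) hx]
  have hb : 0 < x ^ 2 / 2 := by positivity
  have r_succ := gigIntegral_recurrence (a := μ - 3 / 2 + 1) hb (inv_pos.2 ht)
  have r := gigIntegral_recurrence (a := μ - 3 / 2) hb (inv_pos.2 ht)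
  have r_pred := gigIntegral_recurrence (a := μ - 3 / 2 - 1) hb (inv_pos.2 ht)
  rw [show μ - 3 / 2 + 1 - 1 = μ - 3 / 2 by ring,
    show μ - 3 / 2 + 1 - 2 = μ - 3 / 2 - 1 by ring] at r_succ
  rw [show μ - 3 / 2 - 1 - 1 = μ - 3 / 2 - 2 by ring,
    show μ - 3 / 2 - 1 - 2 = μ - 3 / 2 - 3 by ring] at r_pred
  beta_reduce
  linear_combination (2 * π) ^ (-(1 : ℝ) / 2) / Gamma μ * t ^ (-μ) *
    (4 * t⁻¹ * r_succ - 2 * r + 4 * (x ^ 2 / 2) * r_pred)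

/-- the density of `B(G₁(t))` satisfies the third-order p.d.e.
`4 ∂q/∂t = (2μ − 3) ∂²q/∂x² − x ∂³q/∂x³` for all `x ≠ 0`, `t > 0`. -/
theorem stmt_12 (μ : ℝ) (hμ : 0 < μ) :
    ∀ x t : ℝ, x ≠ 0 → 0 < t →
      4 * deriv (fun τ => qBG μ x τ) t
        = (2 * μ - 3) * deriv (deriv (fun ξ => qBG μ ξ t)) x
          - x * deriv (deriv (deriv (fun ξ => qBG μ ξ t))) x :=
  stmt_12_general μ
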